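/- Let $k \ge 0$, $|w_1|, |w_2| > 0$, and for $l \in \mathbb{Z}^n$ define $p_l = (l + \frac{1}{2}e_2)^2 + 2|w_1| l_1 + 2i|w_2|(l_2 + \frac{1}{2})$. Then $|p_l^2 + 2k^2 p_l| \ge |w_2|^2$ for every $l \in \mathbb{Z}^n$. -/

import Mathlib

open Complex

/-- `2m + 1` is an odd integer, hence at least `1` in absolute value. -/
lemma abs_le_abs_mul_two_mul_intCast_add_half (b : ℝ) (m : ℤ) :
    |b| ≤ |2 * b * ((m : ℝ) + 1 / 2)| := by
  have hodd : (1 : ℝ) ≤ |2 * (m : ℝ) + 1| := by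
    have : (1 : ℤ) ≤ |2 * m + 1| := Int.one_le_abs (by omega)
    exact_mod_cast this
  calc |b| = |b| * 1 := (mul_one _).symm
    _ ≤ |b| * |2 * (m : ℝ) + 1| := by gcongr
    _ = |2 * b * ((m : ℝ) + 1 / 2)| := by rw [← abs_mul]; ring_nf

/-- A real shift does not change the imaginary part, so both factors of `p (p + r)` are at
least `|p.im|` in norm. -/
lemma Complex.sq_abs_im_le_norm_sq_add_ofReal_mul (p : ℂ) (r : ℝ) :
    |p.im| ^ 2 ≤ ‖p ^ 2 + r * p‖ := by
  have hshift : |p.im| ≤ ‖p + r‖ := by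
    simpa using abs_im_le_norm (p + r)
  calc |p.im| ^ 2 = |p.im| * |p.im| := sq _
    _ ≤ ‖p‖ * ‖p + r‖ := mul_le_mul (abs_im_le_norm p) hshift (abs_nonneg _) (norm_nonneg _)
    _ = ‖p ^ 2 + r * p‖ := by rw [← norm_mul]; ring_nf

/-- Lower bound for the symbol: `|p_l² + 2k² p_l| ≥ |w₂|²` on the shifted lattice. -/
theorem stmt_7 {n : ℕ} (hn : 2 ≤ n) (k a b : ℝ)
    (l : Fin n → ℤ) :
    ∀ p : ℂ,
      p = ((∑ j, ((l j : ℝ) + if j = (⟨1, by omega⟩ : Fin n) then (1 : ℝ) / 2 else 0) ^ 2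
              + 2 * a * (l (⟨0, by omega⟩ : Fin n) : ℝ) : ℝ) : ℂ)
          + 2 * b * ((l (⟨1, by omega⟩ : Fin n) : ℝ) + 1 / 2) * Complex.I →
      b ^ 2 ≤ ‖p ^ 2 + 2 * (k : ℂ) ^ 2 * p‖ := by
  intro p hp
  have him : p.im = 2 * b * ((l ⟨1, by omega⟩ : ℝ) + 1 / 2) := by
    rw [hp, add_im, ofReal_im, zero_add]
    simp
  calc b ^ 2 = |b| ^ 2 := (sq_abs b).symm
    _ ≤ |p.im| ^ 2 := by
      rw [him]
      exact pow_le_pow_left₀ (abs_nonneg b) (abs_le_abs_mul_two_mul_intCast_add_half b _) 2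
    _ ≤ ‖p ^ 2 + ((2 * k ^ 2 : ℝ) : ℂ) * p‖ := p.sq_abs_im_le_norm_sq_add_ofReal_mul _
    _ = ‖p ^ 2 + 2 * (k : ℂ) ^ 2 * p‖ := by push_cast; rfl
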